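/- arXiv:1410.3044 — 4 statements merged into one kernel-verified Lean document; each statement's English description precedes it below -/
import Mathlib

section
/- For every real number z and every angle ω with 0 < ω < 2π, the system cosh((π−ω)z)·sin((π−ω)/2) = cosh(πz) and sinh((π−ω)z)·cos((π−ω)/2) = 0 has no solution. In other words, sinh((π−ω)y) ≠ sinh(πy) for all y = z + i/2 with z real. -/
open Real Complex

/- On the line `Im y = 1/2` only the imaginary part `cosh(a z) sin(a/2)` of `sinh(a y)` matters:
for `|a| < π` it is strictly smaller than `cosh(π z)`, the imaginary part of `sinh(π y)`, because
`cosh` is even and increasing on `[0, ∞)` while `sin(a/2) < 1`. -/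

theorem Complex.im_sinh_add_mul_I (x y : ℝ) :
    (Complex.sinh (x + y * I)).im = Real.cosh x * Real.sin y := by
  rw [Complex.sinh_add, Complex.sinh_mul_I, Complex.cosh_mul_I, ← ofReal_sinh, ← ofReal_cosh,
    ← ofReal_sin, ← ofReal_cos]
  simp only [add_im, mul_im, ofReal_re, ofReal_im, I_re, I_im]
  ring

theorem Complex.im_sinh_mul_add_I_div_two (a z : ℝ) :
    (Complex.sinh (a * (z + I / 2))).im = Real.cosh (a * z) * Real.sin (a / 2) := by
  rw [← Complex.im_sinh_add_mul_I]
  push_cast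
  ring_nf

theorem Real.sin_half_lt_one {a : ℝ} (ha : |a| < π) : Real.sin (a / 2) < 1 := by
  rw [← Real.sin_pi_div_two]
  obtain ⟨hlow, hhigh⟩ := abs_lt.1 ha
  exact Real.sin_lt_sin_of_lt_of_le_pi_div_two (by linarith) le_rfl (by linarith)

theorem Real.cosh_mul_le_cosh_mul {a b : ℝ} (hab : |a| ≤ |b|) (z : ℝ) :
    Real.cosh (a * z) ≤ Real.cosh (b * z) := by
  rw [Real.cosh_le_cosh, abs_mul, abs_mul]
  exact mul_le_mul_of_nonneg_right hab (abs_nonneg z)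

theorem Real.cosh_mul_mul_sin_half_lt_cosh_pi_mul {a : ℝ} (ha : |a| < π) (z : ℝ) :
    Real.cosh (a * z) * Real.sin (a / 2) < Real.cosh (π * z) :=
  calc Real.cosh (a * z) * Real.sin (a / 2)
      < Real.cosh (a * z) := mul_lt_of_lt_one_right (Real.cosh_pos _) (Real.sin_half_lt_one ha)
    _ ≤ Real.cosh (π * z) :=
        Real.cosh_mul_le_cosh_mul (by rw [abs_of_pos Real.pi_pos]; exact ha.le) z

/-- For every real `z` and every angle `ω` with `0 < ω < 2π`, the system
`cosh((π−ω)z)·sin((π−ω)/2) = cosh(πz)` and `sinh((π−ω)z)·cos((π−ω)/2) = 0`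
has no solution; in other words `sinh((π−ω)y) ≠ sinh(πy)` for `y = z + i/2`. -/
theorem stmt0 (z ω : ℝ) (h1 : 0 < ω) (h2 : ω < 2 * Real.pi) :
    ¬ (Real.cosh ((Real.pi - ω) * z) * Real.sin ((Real.pi - ω) / 2) = Real.cosh (Real.pi * z) ∧
        Real.sinh ((Real.pi - ω) * z) * Real.cos ((Real.pi - ω) / 2) = 0) ∧
    Complex.sinh (((Real.pi : ℂ) - ω) * (z + Complex.I / 2)) ≠
      Complex.sinh ((Real.pi : ℂ) * (z + Complex.I / 2)) := by
  have hlt := Real.cosh_mul_mul_sin_half_lt_cosh_pi_mul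
    (abs_lt.2 ⟨by linarith, by linarith⟩ : |Real.pi - ω| < Real.pi) z
  refine ⟨fun ⟨him, _⟩ => hlt.ne him, fun h => hlt.ne ?_⟩
  have him := congrArg Complex.im h
  rwa [← ofReal_sub, Complex.im_sinh_mul_add_I_div_two, Complex.im_sinh_mul_add_I_div_two,
    Real.sin_pi_div_two, mul_one] at him
end

section
/- For every real z ≠ 0 and ω ∈ (0,2π), |sinh((π−ω)(z + i/2))| < |sinh(π(z + i/2))|, and hence the determinant 1 − sinh²((π−ω)y)/sinh²(πy) of the local symbol is nonzero for all y = z + i/2, z ∈ ℝ. -/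
/-!
On the line `Im y = 1/2` one has `‖sinh (a y)‖² = sinh² (a z) + sin² (a/2)`. Passing from
`a = π` to `a = π - ω` shrinks `|a z|`, so the `sinh²` term does not grow, while the `sin²`
term drops strictly below its value `1` at `a = π` because `(π - ω)/2 ∈ (-π/2, π/2)`.
A strict inequality `‖s‖ < ‖S‖` then rules out `s² = S²`, so the determinant cannot vanish.
-/

open Real Complex

theorem Complex.norm_sinh_add_mul_I_sq (x y : ℝ) :
    ‖Complex.sinh (x + y * I)‖ ^ 2 = Real.sinh x ^ 2 + Real.sin y ^ 2 := by
  have hsplit : Complex.sinh (x + y * I) =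
      ((Real.sinh x * Real.cos y : ℝ) : ℂ) + ((Real.cosh x * Real.sin y : ℝ) : ℂ) * I := by
    rw [Complex.sinh_add, sinh_mul_I, cosh_mul_I]
    push_cast
    ring
  rw [hsplit, Complex.sq_norm, normSq_add_mul_I]
  linear_combination Real.sin y ^ 2 * Real.cosh_sq x + Real.sinh x ^ 2 * Real.sin_sq_add_cos_sq y

theorem Real.sinh_sq_le_sinh_sq {x y : ℝ} (h : |x| ≤ |y|) : Real.sinh x ^ 2 ≤ Real.sinh y ^ 2 := by
  have hcosh : Real.cosh x ^ 2 ≤ Real.cosh y ^ 2 :=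
    pow_le_pow_left₀ (Real.cosh_pos x).le (Real.cosh_le_cosh.mpr h) 2
  rw [Real.cosh_sq, Real.cosh_sq] at hcosh
  linarith

theorem Complex.norm_sinh_add_mul_I_lt {x x' y y' : ℝ} (hx : |x| ≤ |x'|)
    (hy : Real.sin y ^ 2 < Real.sin y' ^ 2) :
    ‖Complex.sinh (x + y * I)‖ < ‖Complex.sinh (x' + y' * I)‖ := by
  refine lt_of_pow_lt_pow_left₀ 2 (norm_nonneg _) ?_
  rw [norm_sinh_add_mul_I_sq, norm_sinh_add_mul_I_sq]
  linarith [Real.sinh_sq_le_sinh_sq hx]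

theorem Complex.ofReal_mul_add_half_I (a z : ℝ) :
    (a : ℂ) * (z + I / 2) = ((a * z : ℝ) : ℂ) + ((a / 2 : ℝ) : ℂ) * I := by
  push_cast
  ring

theorem Real.sin_sq_lt_one_of_mem_Ioo {x : ℝ} (hx : x ∈ Set.Ioo (-(π / 2)) (π / 2)) :
    Real.sin x ^ 2 < 1 := by
  have hcos := Real.cos_pos_of_mem_Ioo hx
  nlinarith [Real.sin_sq_add_cos_sq x]

theorem one_sub_sq_div_sq_ne_zero_of_norm_lt {𝕜 : Type*} [NormedDivisionRing 𝕜] {a b : 𝕜}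
    (h : ‖a‖ < ‖b‖) : 1 - a ^ 2 / b ^ 2 ≠ 0 := by
  have hb : 0 < ‖b‖ := (norm_nonneg a).trans_lt h
  have hlt : ‖a ^ 2 / b ^ 2‖ < 1 := by
    rw [norm_div, norm_pow, norm_pow, div_lt_one (by positivity)]
    exact pow_lt_pow_left₀ h (norm_nonneg a) two_ne_zero
  intro h0
  rw [sub_eq_zero.mp h0 |>.symm, norm_one] at hlt
  exact lt_irrefl 1 hlt

/-- For every real `z ≠ 0` and `ω ∈ (0,2π)`,
`|sinh((π−ω)(z+i/2))| < |sinh(π(z+i/2))|`, and hence the determinant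
`1 − sinh²((π−ω)y)/sinh²(πy)` of the local symbol is nonzero for all
`y = z + i/2`, `z ∈ ℝ`. -/
theorem stmt1 (ω : ℝ) (h1 : 0 < ω) (h2 : ω < 2 * Real.pi) :
    (∀ z : ℝ, z ≠ 0 →
      ‖Complex.sinh (((Real.pi : ℂ) - ω) * (z + Complex.I / 2))‖ <
        ‖Complex.sinh ((Real.pi : ℂ) * (z + Complex.I / 2))‖) ∧
    (∀ z : ℝ,
      1 - (Complex.sinh (((Real.pi : ℂ) - ω) * (z + Complex.I / 2))) ^ 2 /
            (Complex.sinh ((Real.pi : ℂ) * (z + Complex.I / 2))) ^ 2 ≠ 0) := by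
  have key : ∀ z : ℝ,
      ‖Complex.sinh (((Real.pi : ℂ) - ω) * (z + Complex.I / 2))‖ <
        ‖Complex.sinh ((Real.pi : ℂ) * (z + Complex.I / 2))‖ := by
    intro z
    rw [← ofReal_sub, ofReal_mul_add_half_I, ofReal_mul_add_half_I]
    apply norm_sinh_add_mul_I_lt
    · rw [abs_mul, abs_mul, abs_of_pos Real.pi_pos]
      gcongr
      rw [abs_le]
      constructor <;> linarith
    · rw [Real.sin_pi_div_two, one_pow]
      exact Real.sin_sq_lt_one_of_mem_Ioo ⟨by linarith, by linarith⟩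
  exact ⟨fun z _ => key z, fun z => one_sub_sq_div_sq_ne_zero_of_norm_lt (key z)⟩
end

section
/- If (A_n) is a sequence of bounded operators on a Hilbert space H with orthogonal projections P_n → I strongly, and there exist n₀ and C such that A_n P_n : Im P_n → Im P_n is invertible with ‖(A_n P_n)^{-1} P_n‖ ≤ C for all n ≥ n₀, and A_n P_n → A strongly, then A is injective and has closed range; if additionally A_n* P_n → A* strongly then A is invertible with ‖A^{-1}‖ ≤ C. -/
/-!
Passing to the limit in `‖P_n x‖ = ‖B_n A_n P_n x‖ ≤ C ‖A_n P_n x‖` gives `‖x‖ ≤ C ‖A x‖`,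
so `A` is injective with closed range. Taking adjoints of `P_n A_n B_n = P_n` gives
`B_n* A_n* P_n = P_n` with `‖B_n*‖ = ‖B_n‖ ≤ C`, so the same argument bounds `A*` below; then
`(range A)ᗮ = ker A* = 0` and the closed range of `A` is all of `H`. The inverse inherits the
bound `C` from `‖x‖ ≤ C ‖A x‖`.
-/

open Filter Topology NNReal ContinuousLinearMap
open scoped InnerProduct

section ApproximateLeftInverse

variable {𝕜 E F ι : Type*} [NontriviallyNormedField 𝕜] [SeminormedAddCommGroup E]
  [SeminormedAddCommGroup F] [NormedSpace 𝕜 E] [NormedSpace 𝕜 F] {l : Filter ι} [l.NeBot]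

theorem norm_le_mul_norm_of_tendsto_of_leftInverse {Q : ι → E →L[𝕜] E} {T : ι → E →L[𝕜] F}
    {S : ι → F →L[𝕜] E} {C : ℝ} {x : E} {y : F}
    (hQ : Tendsto (fun i => Q i x) l (𝓝 x)) (hT : Tendsto (fun i => T i (Q i x)) l (𝓝 y))
    (hS : ∀ᶠ i in l, S i ∘L T i ∘L Q i = Q i ∧ ‖S i‖ ≤ C) :
    ‖x‖ ≤ C * ‖y‖ := by
  refine le_of_tendsto_of_tendsto hQ.norm (hT.norm.const_mul C)
    (hS.mono fun i ⟨hinv, hnorm⟩ => ?_)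
  calc ‖Q i x‖ = ‖S i (T i (Q i x))‖ := (congrArg norm (DFunLike.congr_fun hinv x)).symm
    _ ≤ C * ‖T i (Q i x)‖ := (S i).le_of_opNorm_le hnorm _

end ApproximateLeftInverse

section Hilbert

variable {𝕜 E F : Type*} [RCLike 𝕜] [NormedAddCommGroup E] [InnerProductSpace 𝕜 E]
  [NormedAddCommGroup F] [InnerProductSpace 𝕜 F] [CompleteSpace E] [CompleteSpace F]

theorem adjoint_comp_adjoint_comp_eq_self {P A B : E →L[𝕜] E} (hP : P† = P)
    (h : P ∘L A ∘L B = P) : B† ∘L A† ∘L P = P := by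
  simpa only [adjoint_comp, hP, comp_assoc] using congrArg adjoint h

theorem range_eq_top_of_isClosed_of_ker_adjoint_eq_bot {T : E →L[𝕜] F}
    (hclosed : IsClosed (T.range : Set F)) (hker : T†.ker = ⊥) : T.range = ⊤ := by
  have : CompleteSpace T.range := hclosed.completeSpace_coe
  rw [← Submodule.orthogonal_eq_bot_iff, orthogonal_range, hker]

end Hilbert

theorem exists_inverse_norm_le_of_bound {𝕜 E F : Type*} [NontriviallyNormedField 𝕜]
    [NormedAddCommGroup E] [NormedAddCommGroup F] [NormedSpace 𝕜 E] [NormedSpace 𝕜 F]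
    [CompleteSpace E] [CompleteSpace F] {T : E →L[𝕜] F} {K : ℝ≥0}
    (hT : ∀ x, ‖x‖ ≤ K * ‖T x‖) (hsurj : T.range = ⊤) :
    ∃ S : F →L[𝕜] E, S ∘L T = .id 𝕜 E ∧ T ∘L S = .id 𝕜 F ∧ ‖S‖ ≤ K := by
  let e := ContinuousLinearEquiv.ofBijective T
    (LinearMap.ker_eq_bot.mpr (T.antilipschitz_of_bound hT).injective) hsurj
  refine ⟨e.symm, ?_, ?_, (e.symm : F →L[𝕜] E).opNorm_le_bound K.2 fun y => ?_⟩
  · ext x; simp [e]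
  · ext y; simp [e]
  · simpa [e] using hT (e.symm y)

theorem stmt17_general {H : Type*} [NormedAddCommGroup H] [InnerProductSpace ℂ H]
    [CompleteSpace H]
    (P A B : ℕ → H →L[ℂ] H) (Alim : H →L[ℂ] H) (n₀ : ℕ) (C : ℝ)
    (hsa : ∀ n, ContinuousLinearMap.adjoint (P n) = P n)
    (hP : ∀ x : H, Filter.Tendsto (fun n => P n x) Filter.atTop (nhds x))
    (hB : ∀ n ≥ n₀,
      (P n).comp ((B n).comp (P n)) = B n ∧
      (B n).comp ((A n).comp (P n)) = P n ∧
      (P n).comp ((A n).comp (B n)) = P n ∧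
      ‖B n‖ ≤ C)
    (hconv : ∀ x : H,
      Filter.Tendsto (fun n => (A n) (P n x)) Filter.atTop (nhds (Alim x))) :
    (Function.Injective Alim ∧ IsClosed (Set.range Alim)) ∧
    ((∀ x : H,
        Filter.Tendsto (fun n => (ContinuousLinearMap.adjoint (A n)) (P n x))
          Filter.atTop (nhds ((ContinuousLinearMap.adjoint Alim) x))) →
      ∃ Ai : H →L[ℂ] H,
        Ai.comp Alim = ContinuousLinearMap.id ℂ H ∧
        Alim.comp Ai = ContinuousLinearMap.id ℂ H ∧ ‖Ai‖ ≤ C) := by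
  lift C to ℝ≥0 using (norm_nonneg _).trans (hB n₀ le_rfl).2.2.2
  have hbound : ∀ x, ‖x‖ ≤ C * ‖Alim x‖ := fun x =>
    norm_le_mul_norm_of_tendsto_of_leftInverse (hP x) (hconv x)
      (eventually_atTop.2 ⟨n₀, fun n hn => ⟨(hB n hn).2.1, (hB n hn).2.2.2⟩⟩)
  have hanti := Alim.antilipschitz_of_bound hbound
  have hclosed := hanti.isClosed_range Alim.uniformContinuous
  refine ⟨⟨hanti.injective, hclosed⟩, fun hconv_adjoint => ?_⟩
  have hbound_adjoint : ∀ x, ‖x‖ ≤ C * ‖(Alim†) x‖ := fun x =>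
    norm_le_mul_norm_of_tendsto_of_leftInverse (hP x) (hconv_adjoint x)
      (eventually_atTop.2 ⟨n₀, fun n hn =>
        ⟨adjoint_comp_adjoint_comp_eq_self (hsa n) (hB n hn).2.2.1,
          (LinearIsometryEquiv.norm_map adjoint (B n)).trans_le (hB n hn).2.2.2⟩⟩)
  have hker_adjoint : Alim†.ker = ⊥ :=
    LinearMap.ker_eq_bot.mpr (Alim†.antilipschitz_of_bound hbound_adjoint).injective
  exact exists_inverse_norm_le_of_bound hbound
    (range_eq_top_of_isClosed_of_ker_adjoint_eq_bot hclosed hker_adjoint)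

/-- Polski-type theorem: if `(A_n)` are bounded operators on a Hilbert space
`H`, `P_n` orthogonal projections converging strongly to `I`, the operators
`A_n P_n : Im P_n → Im P_n` are invertible for `n ≥ n₀` with inverses `B_n`
(`= P_n B_n P_n`) uniformly bounded by `C`, and `A_n P_n → A` strongly, then
`A` is injective with closed range; if additionally `A_n* P_n → A*` strongly,
then `A` is invertible with `‖A⁻¹‖ ≤ C`. -/
theorem stmt17 {H : Type*} [NormedAddCommGroup H] [InnerProductSpace ℂ H]
    [CompleteSpace H]
    (P A B : ℕ → H →L[ℂ] H) (Alim : H →L[ℂ] H) (n₀ : ℕ) (C : ℝ)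
    (hidem : ∀ n, (P n).comp (P n) = P n)
    (hsa : ∀ n, ContinuousLinearMap.adjoint (P n) = P n)
    (hP : ∀ x : H, Filter.Tendsto (fun n => P n x) Filter.atTop (nhds x))
    (hrange : ∀ n, (P n).comp ((A n).comp (P n)) = (A n).comp (P n))
    (hB : ∀ n ≥ n₀,
      (P n).comp ((B n).comp (P n)) = B n ∧
      (B n).comp ((A n).comp (P n)) = P n ∧
      (P n).comp ((A n).comp (B n)) = P n ∧
      ‖B n‖ ≤ C)
    (hconv : ∀ x : H,
      Filter.Tendsto (fun n => (A n) (P n x)) Filter.atTop (nhds (Alim x))) :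
    (Function.Injective Alim ∧ IsClosed (Set.range Alim)) ∧
    ((∀ x : H,
        Filter.Tendsto (fun n => (ContinuousLinearMap.adjoint (A n)) (P n x))
          Filter.atTop (nhds ((ContinuousLinearMap.adjoint Alim) x))) →
      ∃ Ai : H →L[ℂ] H,
        Ai.comp Alim = ContinuousLinearMap.id ℂ H ∧
        Alim.comp Ai = ContinuousLinearMap.id ℂ H ∧ ‖Ai‖ ≤ C) :=
  stmt17_general P A B Alim n₀ C hsa hP hB hconv
end

section
/- The set G of all bounded sequences (G_n) of operators G_n : Im P_n → Im P_n with ‖G_n‖ → 0 forms a closed two-sided ideal in the C*-algebra T of all bounded sequences (A_n) with norm ‖(A_n)‖ = sup_n ‖A_n‖; and a sequence (A_n) ∈ T is stable if and only if the coset (A_n) + G is invertible in the quotient C*-algebra T/G. -/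
/-! The ideal properties of `G` are direct norm estimates. For the stability criterion, if
`A_n B_n - P_n` and `B_n A_n - P_n` have norm at most `1/2`, then `u = 1 - P_n + A_n B_n` and
`w = 1 - P_n + B_n A_n` are invertible by a Neumann series, commute with `P_n`, and
`B_n u⁻¹ = w⁻¹ B_n` is the inverse of `A_n` on `Im P_n`, of norm at most `2 ‖B_n‖`. -/

open Filter ContinuousLinearMap

/-- The algebra `T` of bounded sequences of operators acting on `Im P_n`
(encoded as operators `A_n` on `H` with `P_n A_n P_n = A_n`), with sup-norm
bound. -/
def memT {H : Type*} [NormedAddCommGroup H] [InnerProductSpace ℂ H]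
    [CompleteSpace H] (P A : ℕ → H →L[ℂ] H) : Prop :=
  (∀ n, (P n).comp ((A n).comp (P n)) = A n) ∧ ∃ C : ℝ, ∀ n, ‖A n‖ ≤ C

/-- The set `G` of bounded sequences with `‖G_n‖ → 0`. -/
def memG {H : Type*} [NormedAddCommGroup H] [InnerProductSpace ℂ H]
    [CompleteSpace H] (P A : ℕ → H →L[ℂ] H) : Prop :=
  memT P A ∧ Filter.Tendsto (fun n => ‖A n‖) Filter.atTop (nhds 0)

/-- Stability of a sequence: for `n ≥ n₀` the operators `A_n : Im P_n → Im P_n`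
are invertible (the identity on `Im P_n` being `P_n`) with uniformly bounded
inverses. -/
def stableSeq {H : Type*} [NormedAddCommGroup H] [InnerProductSpace ℂ H]
    [CompleteSpace H] (P A : ℕ → H →L[ℂ] H) : Prop :=
  ∃ n₀ : ℕ, ∃ C : ℝ, ∀ n ≥ n₀, ∃ B : H →L[ℂ] H,
    (P n).comp (B.comp (P n)) = B ∧
    B.comp (A n) = P n ∧ (A n).comp B = P n ∧ ‖B‖ ≤ C

section Corner

variable {R : Type*}

theorem IsIdempotentElem.mul_eq_of_mul_mul_eq [Semigroup R] {p a : R} (hp : IsIdempotentElem p)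
    (h : p * (a * p) = a) : p * a = a := by
  rw [← h, ← mul_assoc, hp.eq]

theorem IsIdempotentElem.mul_eq_of_mul_mul_eq' [Semigroup R] {p a : R} (hp : IsIdempotentElem p)
    (h : p * (a * p) = a) : a * p = a := by
  rw [← h, mul_assoc, mul_assoc, hp.eq]

theorem IsIdempotentElem.inverse_in_corner_of_units [Ring R] {p a b : R} (hp : IsIdempotentElem p)
    (pa : p * a = a) (ap : a * p = a) (pb : p * b = b) (bp : b * p = b)
    (u w : Rˣ) (hu : (u : R) = 1 - p + a * b) (hw : (w : R) = 1 - p + b * a) :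
    p * (b * ↑u⁻¹) = b * ↑u⁻¹ ∧ b * ↑u⁻¹ * p = b * ↑u⁻¹ ∧
      b * ↑u⁻¹ * a = p ∧ a * (b * ↑u⁻¹) = p := by
  have pu : p * u = a * b := by rw [hu, mul_add, mul_sub, mul_one, hp.eq, ← mul_assoc, pa]; abel
  have up : Commute p u := by
    rw [Commute, SemiconjBy, pu, hu, add_mul, sub_mul, one_mul, hp.eq, mul_assoc, bp]; abel
  have wp : w * p = b * a := by rw [hw, add_mul, sub_mul, one_mul, hp.eq, mul_assoc, ap]; abel
  have right : a * (b * ↑u⁻¹) = p := by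
    rw [← mul_assoc, ← pu, mul_assoc, Units.mul_inv, mul_one]
  have left : ↑w⁻¹ * b * a = p := by
    rw [mul_assoc, ← wp, ← mul_assoc, Units.inv_mul, one_mul]
  have corner_left : p * (b * ↑u⁻¹) = b * ↑u⁻¹ := by rw [← mul_assoc, pb]
  have left_eq_right : ↑w⁻¹ * b = b * ↑u⁻¹ := by
    calc ↑w⁻¹ * b = ↑w⁻¹ * b * (a * (b * ↑u⁻¹)) := by rw [right, mul_assoc, bp]
      _ = b * ↑u⁻¹ := by rw [← mul_assoc, left, corner_left]
  refine ⟨corner_left, ?_, left_eq_right ▸ left, right⟩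
  rw [mul_assoc, ← up.units_inv_right.eq, ← mul_assoc, bp]

theorem IsIdempotentElem.exists_inverse_in_corner [NormedRing R] [HasSummableGeomSeries R]
    {p a b : R} (hp : IsIdempotentElem p)
    (pa : p * a = a) (ap : a * p = a) (pb : p * b = b) (bp : b * p = b)
    (hab : ‖a * b - p‖ ≤ 1 / 2) (hba : ‖b * a - p‖ ≤ 1 / 2) :
    ∃ c : R, p * c = c ∧ c * p = c ∧ c * a = p ∧ a * c = p ∧ ‖c‖ ≤ ‖b‖ * (‖(1 : R)‖ + 1) := by
  have small {x : R} (hx : ‖x - p‖ ≤ 1 / 2) : ‖p - x‖ < 1 := by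
    rw [norm_sub_rev]; linarith
  set u := Units.oneSub (p - a * b) (small hab)
  have hu : (u : R) = 1 - p + a * b := by simp only [u, Units.val_oneSub]; abel
  have hw : ((Units.oneSub (p - b * a) (small hba) : Rˣ) : R) = 1 - p + b * a := by
    simp only [Units.val_oneSub]; abel
  obtain ⟨pc, cp, ca, ac⟩ := hp.inverse_in_corner_of_units pa ap pb bp u _ hu hw
  have norm_inv : ‖(↑u⁻¹ : R)‖ ≤ ‖(1 : R)‖ + 1 :=
    calc ‖(↑u⁻¹ : R)‖ ≤ ‖(1 : R)‖ - 1 + (1 - ‖p - a * b‖)⁻¹ :=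
          tsum_geometric_le_of_norm_lt_one _ (small hab)
      _ ≤ ‖(1 : R)‖ - 1 + 2 := by
          gcongr
          rw [inv_le_comm₀ (by linarith [small hab]) two_pos, norm_sub_rev]
          linarith
      _ = ‖(1 : R)‖ + 1 := by ring
  exact ⟨_, pc, cp, ca, ac, (norm_mul_le _ _).trans (by gcongr)⟩

end Corner

section Sequences

variable {H : Type*} [NormedAddCommGroup H] [InnerProductSpace ℂ H] [CompleteSpace H]
  {P A B G : ℕ → H →L[ℂ] H}

theorem memT.proj_mul (hP : ∀ n, IsIdempotentElem (P n)) (hA : memT P A) (n : ℕ) :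
    P n * A n = A n :=
  (hP n).mul_eq_of_mul_mul_eq (hA.1 n)

theorem memT.mul_proj (hP : ∀ n, IsIdempotentElem (P n)) (hA : memT P A) (n : ℕ) :
    A n * P n = A n :=
  (hP n).mul_eq_of_mul_mul_eq' (hA.1 n)

theorem memT.exists_nonneg_bound (hA : memT P A) : ∃ C, 0 ≤ C ∧ ∀ n, ‖A n‖ ≤ C := by
  obtain ⟨C, hC⟩ := hA.2
  exact ⟨C, (norm_nonneg _).trans (hC 0), hC⟩

theorem memT.comp (hP : ∀ n, IsIdempotentElem (P n)) (hA : memT P A) (hB : memT P B) :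
    memT P (fun n => (A n).comp (B n)) := by
  obtain ⟨CA, hCA0, hCA⟩ := hA.exists_nonneg_bound
  obtain ⟨CB, -, hCB⟩ := hB.exists_nonneg_bound
  refine ⟨fun n => ?_, CA * CB, fun n => ?_⟩
  · change P n * (A n * B n * P n) = A n * B n
    rw [mul_assoc (A n), ← mul_assoc (P n), hA.proj_mul hP, hB.mul_proj hP]
  · exact (opNorm_comp_le _ _).trans (mul_le_mul (hCA n) (hCB n) (norm_nonneg _) hCA0)

theorem memT.add (hA : memT P A) (hB : memT P B) : memT P (fun n => A n + B n) := by
  obtain ⟨CA, hCA⟩ := hA.2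
  obtain ⟨CB, hCB⟩ := hB.2
  refine ⟨fun n => ?_, CA + CB, fun n => (norm_add_le _ _).trans (add_le_add (hCA n) (hCB n))⟩
  change P n * ((A n + B n) * P n) = A n + B n
  rw [add_mul, mul_add]
  exact congrArg₂ (· + ·) (hA.1 n) (hB.1 n)

theorem memG.comp_left (hP : ∀ n, IsIdempotentElem (P n)) (hA : memT P A) (hG : memG P G) :
    memG P (fun n => (A n).comp (G n)) := by
  obtain ⟨C, -, hC⟩ := hA.exists_nonneg_bound
  refine ⟨hA.comp hP hG.1, squeeze_zero (fun n => norm_nonneg _) (fun n => ?_)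
    (by simpa using hG.2.const_mul C)⟩
  exact (opNorm_comp_le _ _).trans (mul_le_mul_of_nonneg_right (hC n) (norm_nonneg _))

theorem memG.comp_right (hP : ∀ n, IsIdempotentElem (P n)) (hA : memT P A) (hG : memG P G) :
    memG P (fun n => (G n).comp (A n)) := by
  obtain ⟨C, -, hC⟩ := hA.exists_nonneg_bound
  refine ⟨hG.1.comp hP hA, squeeze_zero (fun n => norm_nonneg _) (fun n => ?_)
    (by simpa using hG.2.mul_const C)⟩
  exact (opNorm_comp_le _ _).trans (mul_le_mul_of_nonneg_left (hC n) (norm_nonneg _))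

theorem memG.add (hA : memG P A) (hB : memG P B) : memG P (fun n => A n + B n) :=
  ⟨hA.1.add hB.1, squeeze_zero (fun n => norm_nonneg _) (fun n => norm_add_le _ _)
    (by simpa using hA.2.add hB.2)⟩

theorem memG_of_forall_exists_memG_dist_le (hA : memT P A)
    (h : ∀ δ : ℝ, 0 < δ → ∃ G, memG P G ∧ ∀ n, ‖A n - G n‖ ≤ δ) : memG P A := by
  refine ⟨hA, NormedAddGroup.tendsto_nhds_zero.2 fun ε hε => ?_⟩
  obtain ⟨G, hG, hAG⟩ := h (ε / 2) (half_pos hε)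
  filter_upwards [NormedAddGroup.tendsto_nhds_zero.1 hG.2 (ε / 2) (half_pos hε)] with n hn
  rw [norm_norm] at hn ⊢
  calc ‖A n‖ ≤ ‖A n - G n‖ + ‖G n‖ := norm_le_norm_sub_add _ _
    _ < ε := by linarith [hAG n]

theorem stableSeq.exists_inverse_modulo_memG (hA : stableSeq P A) :
    ∃ B : ℕ → H →L[ℂ] H, memT P B ∧
      Tendsto (fun n => ‖(A n).comp (B n) - P n‖) atTop (nhds 0) ∧
      Tendsto (fun n => ‖(B n).comp (A n) - P n‖) atTop (nhds 0) := by
  classical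
  obtain ⟨n₀, C, hinv⟩ := hA
  choose! B hB using hinv
  refine ⟨fun n => if n₀ ≤ n then B n else 0, ⟨fun n => ?_, max C 0, fun n => ?_⟩, ?_, ?_⟩
  · dsimp only
    split_ifs with hn
    exacts [(hB n hn).1, by simp]
  · dsimp only
    split_ifs with hn
    exacts [(hB n hn).2.2.2.trans (le_max_left _ _), by simp]
  all_goals
    refine tendsto_const_nhds.congr' ?_
    filter_upwards [eventually_ge_atTop n₀] with n hn
    simp [hn, (hB n hn).2.1, (hB n hn).2.2.1]

theorem stableSeq_of_tendsto (hP : ∀ n, IsIdempotentElem (P n)) (hA : memT P A)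
    (hB : memT P B) (hAB : Tendsto (fun n => ‖(A n).comp (B n) - P n‖) atTop (nhds 0))
    (hBA : Tendsto (fun n => ‖(B n).comp (A n) - P n‖) atTop (nhds 0)) : stableSeq P A := by
  obtain ⟨C, -, hC⟩ := hB.exists_nonneg_bound
  have small := (hAB.eventually (ge_mem_nhds one_half_pos)).and
    (hBA.eventually (ge_mem_nhds one_half_pos))
  obtain ⟨n₀, hn₀⟩ := eventually_atTop.1 small
  refine ⟨n₀, C * 2, fun n hn => ?_⟩
  obtain ⟨c, pc, cp, ca, ac, hc⟩ := (hP n).exists_inverse_in_corner (hA.proj_mul hP n)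
    (hA.mul_proj hP n) (hB.proj_mul hP n) (hB.mul_proj hP n) (hn₀ n hn).1 (hn₀ n hn).2
  refine ⟨c, ?_, ca, ac, hc.trans ?_⟩
  · change P n * (c * P n) = c
    rw [cp, pc]
  · gcongr
    · exact (norm_nonneg _).trans (hC 0)
    · exact hC n
    · exact (add_le_add_left (norm_id_le (𝕜 := ℂ) (E := H)) 1).trans_eq one_add_one_eq_two

end Sequences

theorem stmt18_general {H : Type*} [NormedAddCommGroup H] [InnerProductSpace ℂ H]
    [CompleteSpace H] (P : ℕ → H →L[ℂ] H)
    (hidem : ∀ n, (P n).comp (P n) = P n) :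
    (∀ A G : ℕ → H →L[ℂ] H, memT P A → memG P G →
      memG P (fun n => (A n).comp (G n)) ∧ memG P (fun n => (G n).comp (A n))) ∧
    (∀ G₁ G₂ : ℕ → H →L[ℂ] H, memG P G₁ → memG P G₂ →
      memG P (fun n => G₁ n + G₂ n)) ∧
    (∀ A : ℕ → H →L[ℂ] H, memT P A →
      (∀ δ : ℝ, 0 < δ → ∃ G : ℕ → H →L[ℂ] H, memG P G ∧ ∀ n, ‖A n - G n‖ ≤ δ) →
      memG P A) ∧
    (∀ A : ℕ → H →L[ℂ] H, memT P A →
      (stableSeq P A ↔ ∃ B : ℕ → H →L[ℂ] H, memT P B ∧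
        Filter.Tendsto (fun n => ‖(A n).comp (B n) - P n‖) Filter.atTop (nhds 0) ∧
        Filter.Tendsto (fun n => ‖(B n).comp (A n) - P n‖) Filter.atTop (nhds 0))) :=
  ⟨fun _ _ hA hG => ⟨hG.comp_left hidem hA, hG.comp_right hidem hA⟩,
    fun _ _ => memG.add,
    fun _ => memG_of_forall_exists_memG_dist_le,
    fun _ hA => ⟨stableSeq.exists_inverse_modulo_memG,
      fun ⟨_, hB, hAB, hBA⟩ => stableSeq_of_tendsto hidem hA hB hAB hBA⟩⟩

/-- `G` is a closed two-sided ideal of the C*-algebra `T` of bounded operator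
sequences, and a sequence `(A_n) ∈ T` is stable iff its coset `(A_n) + G` is
invertible in `T/G`, i.e. iff `(A_n)` is invertible modulo `G` (there is
`(B_n) ∈ T` with `‖A_n B_n − P_n‖ → 0` and `‖B_n A_n − P_n‖ → 0`). -/
theorem stmt18 {H : Type*} [NormedAddCommGroup H] [InnerProductSpace ℂ H]
    [CompleteSpace H] (P : ℕ → H →L[ℂ] H)
    (hidem : ∀ n, (P n).comp (P n) = P n)
    (hsa : ∀ n, ContinuousLinearMap.adjoint (P n) = P n)
    (hP : ∀ x : H, Filter.Tendsto (fun n => P n x) Filter.atTop (nhds x)) :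
    (∀ A G : ℕ → H →L[ℂ] H, memT P A → memG P G →
      memG P (fun n => (A n).comp (G n)) ∧ memG P (fun n => (G n).comp (A n))) ∧
    (∀ G₁ G₂ : ℕ → H →L[ℂ] H, memG P G₁ → memG P G₂ →
      memG P (fun n => G₁ n + G₂ n)) ∧
    (∀ A : ℕ → H →L[ℂ] H, memT P A →
      (∀ δ : ℝ, 0 < δ → ∃ G : ℕ → H →L[ℂ] H, memG P G ∧ ∀ n, ‖A n - G n‖ ≤ δ) →
      memG P A) ∧
    (∀ A : ℕ → H →L[ℂ] H, memT P A →
      (stableSeq P A ↔ ∃ B : ℕ → H →L[ℂ] H, memT P B ∧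
        Filter.Tendsto (fun n => ‖(A n).comp (B n) - P n‖) Filter.atTop (nhds 0) ∧
        Filter.Tendsto (fun n => ‖(B n).comp (A n) - P n‖) Filter.atTop (nhds 0))) :=
  stmt18_general P hidem
end
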